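/- For every r ≥ 2, there is an r-coloring of {1,...,n} with at most n²/(2^{2r−3}·11) + O(n) monochromatic Schur triples. The coloring: color C_j for n/2^j < i ≤ n/2^{j−1} (1 ≤ j ≤ r−2); color C_{r−1} for i ≤ 4n/(2^{r−2}·11) or 10n/(2^{r−2}·11) < i ≤ n/2^{r−2}; color C_r for 4n/(2^{r−2}·11) < i ≤ 10n/(2^{r−2}·11). -/

import Mathlib

/-!
The dyadic blocks `(n / 2 ^ (t + 1), n / 2 ^ t]`, `t < r - 2`, are sum-free and get one colour
each. With `u = n / (2 ^ (r - 2) * 11)`, the remaining range `[1, 11 u]` is coloured by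
`C_r` on `(4 u, 10 u]` and by `C_{r-1}` elsewhere. A monochromatic triple `(i, j, i + j)` then lies
in one of three triangles: `i < j`, `i + j ≤ 4 u` (at most `(4 u) ^ 2 / 4` points);
`4 u < i < j`, `i + j ≤ 10 u` (at most `(2 u) ^ 2 / 4`); or `10 u < j`, `i + j ≤ 11 u`
(at most `u ^ 2 / 2`). In total this is `11 u ^ 2 / 2 = n ^ 2 / (2 ^ (2 r - 3) * 11)`.
-/

open Finset

/-- Number of monochromatic Schur triples (i, j, i+j), i < j, i+j ≤ n, of a coloring c. -/
def schurCount {α : Type*} [DecidableEq α] (n : ℕ) (c : ℕ → α) : ℕ :=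
  ((Finset.Icc 1 n ×ˢ Finset.Icc 1 n).filter
    (fun p => p.1 < p.2 ∧ p.1 + p.2 ≤ n ∧ c p.1 = c p.2 ∧ c p.2 = c (p.1 + p.2))).card

lemma two_mul_card_le_of_forall_mem_triangle {S : Finset (ℕ × ℕ)} {x y m : ℕ}
    (hS : ∀ p ∈ S, x < p.1 ∧ y < p.2 ∧ p.1 + p.2 ≤ x + y + m) : 2 * #S ≤ m * m := by
  -- the point reflection of the box `(x, x + m] × (y, y + m]` moves `S` off itself
  set ρ : ℕ × ℕ → ℕ × ℕ := fun p => (2 * x + m + 1 - p.1, 2 * y + m + 1 - p.2)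
  have hbox : S ∪ S.image ρ ⊆ Ioc x (x + m) ×ˢ Ioc y (y + m) := by
    rintro ⟨i, j⟩ h
    simp only [mem_union, mem_image, mem_product, mem_Ioc, Prod.ext_iff, ρ] at h ⊢
    rcases h with h | ⟨⟨i', j'⟩, h', rfl, rfl⟩
    · have := hS _ h; dsimp at this; omega
    · have := hS _ h'; dsimp at this; omega
  have hdisj : Disjoint S (S.image ρ) := by
    rw [disjoint_right]
    rintro _ hq hp
    obtain ⟨p, hp', rfl⟩ := mem_image.mp hq
    have := hS _ hp; have := hS _ hp'; dsimp [ρ] at *; omega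
  have hinj : Set.InjOn ρ S := by
    rintro ⟨i, j⟩ h ⟨i', j'⟩ h' heq
    have := hS _ h; have := hS _ h'
    simp only [Prod.ext_iff, ρ] at heq this ⊢; omega
  calc 2 * #S = #(S ∪ S.image ρ) := by
        rw [card_union_of_disjoint hdisj, card_image_of_injOn hinj, two_mul]
    _ ≤ #(Ioc x (x + m) ×ˢ Ioc y (y + m)) := card_le_card hbox
    _ = m * m := by simp

lemma four_mul_card_le_of_forall_mem_half_triangle {S : Finset (ℕ × ℕ)} {x m : ℕ}
    (hS : ∀ p ∈ S, x < p.1 ∧ p.1 < p.2 ∧ p.1 + p.2 ≤ 2 * x + m) : 4 * #S ≤ m * m := by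
  set T := S.map (Equiv.prodComm ℕ ℕ).toEmbedding
  have hT : ∀ p ∈ T, x < p.2 ∧ p.2 < p.1 ∧ p.2 + p.1 ≤ 2 * x + m := by
    simpa [T] using fun i j h => hS (j, i) h
  have hdisj : Disjoint S T := by
    rw [disjoint_left]
    intro p hp hp'
    have := hS p hp; have := hT p hp'; omega
  have := two_mul_card_le_of_forall_mem_triangle (S := S ∪ T) (x := x) (y := x) (m := m) (by
    intro p hp
    rcases mem_union.mp hp with h | h
    · have := hS p h; omega
    · have := hT p h; omega)
  rw [card_union_of_disjoint hdisj, card_map] at this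
  omega

lemma Nat.log_two_div_add_lt {n i j : ℕ} (hi : 0 < i) (hij : i ≤ j) (hn : i + j ≤ n) :
    Nat.log 2 (n / (i + j)) < Nat.log 2 (n / i) := by
  have hpos : 1 ≤ n / (i + j) := (Nat.one_le_div_iff (by omega)).mpr hn
  have hhalf : n / (i + j) ≤ n / i / 2 := by
    rw [Nat.div_div_eq_div_mul]; exact Nat.div_le_div_left (by omega) (by omega)
  have hlog : 1 ≤ Nat.log 2 (n / i) := Nat.log_pos (by norm_num) <| by
    have := (Nat.le_div_iff_mul_le (by norm_num)).mp (hpos.trans hhalf); omega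
  calc Nat.log 2 (n / (i + j)) ≤ Nat.log 2 (n / i / 2) := Nat.log_mono_right hhalf
    _ = Nat.log 2 (n / i) - 1 := Nat.log_div_base 2 _
    _ < Nat.log 2 (n / i) := by omega

lemma Nat.log_two_div_lt_of_div_pow_lt {n s i : ℕ} (hi : n / 2 ^ s < i) (hin : i ≤ n) :
    Nat.log 2 (n / i) < s := by
  have hi0 : 0 < i := Nat.zero_lt_of_lt hi
  refine Nat.log_lt_of_lt_pow (Nat.div_pos hin hi0).ne' ?_
  rw [Nat.div_lt_iff_lt_mul hi0]
  rw [Nat.div_lt_iff_lt_mul (by positivity)] at hi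
  linarith

lemma schurCount_comp_injective {α β : Type*} [DecidableEq α] [DecidableEq β] {f : α → β}
    (hf : Function.Injective f) (n : ℕ) (c : ℕ → α) :
    schurCount n (f ∘ c) = schurCount n c := by
  simp only [schurCount, Function.comp_apply, hf.eq_iff]

/-- For `M < i` the colour `Nat.log 2 (n / i) = t` is the paper's `C_{t+1}`, the dyadic block
`n / 2 ^ (t + 1) < i ≤ n / 2 ^ t`; the colours `s` and `s + 1` are `C_{r-1}` and `C_r`,
where `r = s + 2`. -/
def thresholdColoring (s n a b M : ℕ) (i : ℕ) : ℕ :=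
  if i ≤ a then s else if i ≤ b then s + 1 else if i ≤ M then s else Nat.log 2 (n / i)

section thresholdColoring

variable {s n a b M : ℕ}

lemma thresholdColoring_lt (hM : n / 2 ^ s ≤ M) (i : ℕ) :
    thresholdColoring s n a b M i < s + 2 := by
  unfold thresholdColoring
  split_ifs
  all_goals try omega
  rcases le_or_gt i n with hin | hni
  · have := Nat.log_two_div_lt_of_div_pow_lt (s := s) (by omega) hin; omega
  · simp [Nat.div_eq_of_lt hni]

lemma thresholdColoring_mono_cases (hab : 2 * a ≤ b) (hMb : M ≤ 2 * b + 1)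
    (hM : n / 2 ^ s ≤ M) {i j : ℕ} (hi : 0 < i) (hij : i < j) (hn : i + j ≤ n)
    (hc₁ : thresholdColoring s n a b M i = thresholdColoring s n a b M j)
    (hc₂ : thresholdColoring s n a b M j = thresholdColoring s n a b M (i + j)) :
    i + j ≤ a ∨ a < i ∧ i + j ≤ b ∨ b < j ∧ i + j ≤ M := by
  have hj : M < j → Nat.log 2 (n / j) < s := fun h =>
    Nat.log_two_div_lt_of_div_pow_lt (by omega) (by omega)
  have hsum : M < i + j → Nat.log 2 (n / (i + j)) < s := fun h =>
    Nat.log_two_div_lt_of_div_pow_lt (by omega) hn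
  have hdyadic := Nat.log_two_div_add_lt hi hij.le hn
  -- besides these facts: two elements of `[1, a]` cannot sum into `(b, M]` as `2 a ≤ b`,
  -- and two elements of `(b, M]` sum beyond `M` as `M < 2 b + 2`
  unfold thresholdColoring at hc₁ hc₂
  split_ifs at hc₁ hc₂ <;> omega

lemma four_mul_schurCount_thresholdColoring_le (hab : 2 * a ≤ b) (hMb : M ≤ 2 * b + 1)
    (hM : n / 2 ^ s ≤ M) :
    4 * schurCount n (thresholdColoring s n a b M) ≤
      a * a + (b - 2 * a) * (b - 2 * a) + 2 * ((M - b) * (M - b)) := by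
  unfold schurCount
  set S := (Icc 1 n ×ˢ Icc 1 n).filter fun p => p.1 < p.2 ∧ p.1 + p.2 ≤ n ∧
    thresholdColoring s n a b M p.1 = thresholdColoring s n a b M p.2 ∧
    thresholdColoring s n a b M p.2 = thresholdColoring s n a b M (p.1 + p.2)
  have hS : ∀ p ∈ S, 0 < p.1 ∧ p.1 < p.2 ∧
      (p.1 + p.2 ≤ a ∨ a < p.1 ∧ p.1 + p.2 ≤ b ∨ b < p.2 ∧ p.1 + p.2 ≤ M) := by
    intro p hp
    simp only [S, mem_filter, mem_product, mem_Icc] at hp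
    exact ⟨hp.1.1.1, hp.2.1,
      thresholdColoring_mono_cases hab hMb hM hp.1.1.1 hp.2.1 hp.2.2.1 hp.2.2.2.1 hp.2.2.2.2⟩
  set T₁ := S.filter fun p => p.1 + p.2 ≤ a
  set T₂ := S.filter fun p => a < p.1 ∧ p.1 + p.2 ≤ b
  set T₃ := S.filter fun p => b < p.2 ∧ p.1 + p.2 ≤ M
  have hcover : S ⊆ T₁ ∪ T₂ ∪ T₃ := by
    intro p hp
    simp only [T₁, T₂, T₃, mem_union, mem_filter]
    have := hS p hp
    tauto
  have h₁ := four_mul_card_le_of_forall_mem_half_triangle (S := T₁) (x := 0) (m := a)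
    fun p hp => by have := hS p (mem_filter.mp hp).1; have := (mem_filter.mp hp).2; omega
  have h₂ := four_mul_card_le_of_forall_mem_half_triangle (S := T₂) (x := a)
    (m := b - 2 * a)
    fun p hp => by have := hS p (mem_filter.mp hp).1; have := (mem_filter.mp hp).2; omega
  have h₃ := two_mul_card_le_of_forall_mem_triangle (S := T₃) (x := 0) (y := b) (m := M - b)
    fun p hp => by have := hS p (mem_filter.mp hp).1; have := (mem_filter.mp hp).2; omega
  have := card_le_card hcover
  have := card_union_le (T₁ ∪ T₂) T₃
  have := card_union_le T₁ T₂
  omega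

end thresholdColoring

lemma two_mul_div_le_div (s n : ℕ) : 2 * (4 * n / (11 * 2 ^ s)) ≤ 10 * n / (11 * 2 ^ s) :=
  (Nat.mul_div_le_mul_div_assoc 2 _ _).trans (Nat.div_le_div_right (by omega))

lemma div_le_div_pow (s n : ℕ) : 10 * n / (11 * 2 ^ s) ≤ n / 2 ^ s := by
  rw [← Nat.mul_div_mul_left n (2 ^ s) (by norm_num : 0 < 11)]
  exact Nat.div_le_div_right (by omega)

lemma div_pow_le_two_mul_div_add_one (s n : ℕ) :
    n / 2 ^ s ≤ 2 * (10 * n / (11 * 2 ^ s)) + 1 := by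
  have hD : 0 < 11 * 2 ^ s := by positivity
  have h := Nat.lt_div_mul_add (a := 10 * n) hD
  rw [← Nat.mul_div_mul_left n (2 ^ s) (by norm_num : 0 < 11), Nat.lt_succ_iff.symm,
    Nat.div_lt_iff_lt_mul hD]
  nlinarith

lemma le_div_add_of_floor_bounds {d n a b M k : ℝ} (hd : 11 ≤ d) (hn : 1 ≤ n) (ha : 0 ≤ a)
    (ha₁ : d * a ≤ 4 * n) (ha₂ : 4 * n < d * a + d) (hb₁ : d * b ≤ 10 * n)
    (hb₂ : 10 * n < d * b + d) (hM : d * M ≤ 11 * n) (hab : 2 * a ≤ b) (hbM : b ≤ M)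
    (hk : 4 * k ≤ a * a + (b - 2 * a) * (b - 2 * a) + 2 * ((M - b) * (M - b))) :
    k ≤ n ^ 2 / (2 * d ^ 2 / 11) + 2 * n := by
  have e₁ : (d * a) ^ 2 ≤ (4 * n) ^ 2 := pow_le_pow_left₀ (by positivity) ha₁ 2
  have e₂ : (d * (b - 2 * a)) ^ 2 ≤ (2 * n + 2 * d) ^ 2 :=
    pow_le_pow_left₀ (by nlinarith) (by nlinarith) 2
  have e₃ : (d * (M - b)) ^ 2 ≤ (n + d) ^ 2 :=
    pow_le_pow_left₀ (by nlinarith) (by nlinarith) 2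
  have hsq : d ^ 2 * (4 * k) ≤ 22 * n ^ 2 + 12 * n * d + 6 * d ^ 2 := by nlinarith
  rw [div_div_eq_mul_div, ← sub_le_iff_le_add, le_div_iff₀ (by positivity)]
  nlinarith [mul_nonneg (sub_nonneg.mpr hn) (sq_nonneg d),
    mul_nonneg (mul_nonneg (by linarith : (0 : ℝ) ≤ n) (by linarith : (0 : ℝ) ≤ d))
      (sub_nonneg.mpr hd)]

def schurColoring (s n : ℕ) : ℕ → ℕ :=
  thresholdColoring s n (4 * n / (11 * 2 ^ s)) (10 * n / (11 * 2 ^ s)) (n / 2 ^ s)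

lemma schurCount_schurColoring_le (s n : ℕ) :
    (schurCount n (schurColoring s n) : ℝ) ≤
      (n : ℝ) ^ 2 / (2 ^ (2 * s + 1) * 11) + 2 * n := by
  rcases n.eq_zero_or_pos with rfl | hn
  · simp [schurCount]
  set a := 4 * n / (11 * 2 ^ s)
  set b := 10 * n / (11 * 2 ^ s)
  set M := n / 2 ^ s
  have hab : 2 * a ≤ b := two_mul_div_le_div s n
  have hbM : b ≤ M := div_le_div_pow s n
  have hD : 0 < 11 * 2 ^ s := by positivity
  have ha₁ : 11 * 2 ^ s * a ≤ 4 * n := Nat.mul_div_le _ _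
  have ha₂ : 4 * n < 11 * 2 ^ s * a + 11 * 2 ^ s := by
    have : 4 * n < a * (11 * 2 ^ s) + 11 * 2 ^ s := Nat.lt_div_mul_add hD; linarith
  have hb₁ : 11 * 2 ^ s * b ≤ 10 * n := Nat.mul_div_le _ _
  have hb₂ : 10 * n < 11 * 2 ^ s * b + 11 * 2 ^ s := by
    have : 10 * n < b * (11 * 2 ^ s) + 11 * 2 ^ s := Nat.lt_div_mul_add hD; linarith
  have hM₁ : 11 * 2 ^ s * M ≤ 11 * n := by
    have : M * 2 ^ s ≤ n := Nat.div_mul_le_self n (2 ^ s); linarith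
  have hcount : 4 * (schurCount n (schurColoring s n) : ℝ) ≤
      a * a + (b - 2 * a) * (b - 2 * a) + 2 * ((M - b) * (M - b)) := by
    have := (Nat.cast_le (α := ℝ)).mpr <| four_mul_schurCount_thresholdColoring_le (M := M) hab
      (div_pow_le_two_mul_div_add_one s n) le_rfl
    push_cast [Nat.cast_sub hab, Nat.cast_sub hbM] at this
    exact this
  rw [show (2 : ℝ) ^ (2 * s + 1) * 11 = 2 * (11 * 2 ^ s) ^ 2 / 11 by ring]
  exact le_div_add_of_floor_bounds
    (by nlinarith [one_le_pow₀ (M₀ := ℝ) (a := 2) (n := s) (by norm_num)])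
    (by exact_mod_cast hn) (by positivity) (by exact_mod_cast ha₁) (by exact_mod_cast ha₂)
    (by exact_mod_cast hb₁) (by exact_mod_cast hb₂) (by exact_mod_cast hM₁)
    (by exact_mod_cast hab) (by exact_mod_cast hbM) hcount

theorem rColoring_upper_bound (r : ℕ) (hr : 2 ≤ r) :
    ∃ C : ℝ, ∀ n : ℕ, ∃ c : ℕ → Fin r,
      (schurCount n c : ℝ) ≤ (n : ℝ) ^ 2 / (2 ^ (2 * r - 3) * 11) + C * n := by
  obtain ⟨s, rfl⟩ : ∃ s, r = s + 2 := ⟨r - 2, by omega⟩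
  refine ⟨2, fun n => ⟨fun i => ⟨schurColoring s n i, thresholdColoring_lt le_rfl i⟩, ?_⟩⟩
  rw [← schurCount_comp_injective Fin.val_injective,
    show 2 * (s + 2) - 3 = 2 * s + 1 by omega]
  exact schurCount_schurColoring_le s n
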